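/- Let λ_1, …, λ_n ∈ [-1,1] and let N be a positive integer divisible by 4. For k = 0,…,N set τ_k = (1/n)·Σ_{i=1}^{n} T̄_k(λ_i), and define q(x) = w(x)·Σ_{k=0}^{N} (b̂_N[k]/b̂_N[0]) · τ_k · T̄_k(x). Then for every continuous function f : [-1,1] → ℝ, one has ∫_{−1}^{1} f(x) q(x) dx = (1/n)·Σ_{i=1}^{n} f̄_N(λ_i), where f̄_N = Σ_{k=0}^{N} (b̂_N[k]/b̂_N[0]) · ⟨f, w·T̄_k⟩ · T̄_k is the Jackson damped Chebyshev approximation of f. -/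
import Mathlib


open MeasureTheory

/-- The normalized Chebyshev polynomials of the first kind, as functions on `ℝ`:
`T̄_0 = T_0 / √π` and `T̄_k = √(2/π) · T_k` for `k ≥ 1`. -/
noncomputable def Tbar (k : ℕ) (x : ℝ) : ℝ :=
  if k = 0 then ((Polynomial.Chebyshev.T ℝ 0).eval x) / Real.sqrt Real.pi
  else Real.sqrt (2 / Real.pi) * ((Polynomial.Chebyshev.T ℝ (k : ℤ)).eval x)

/-- The Chebyshev weight function `w(x) = 1/√(1 - x²)`. -/
noncomputable def wCheb (x : ℝ) : ℝ := 1 / Real.sqrt (1 - x ^ 2)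

/-- The Jackson coefficients
`b̂_N[k] = Σ_{j = -N/2-1}^{N/2+1-k} (N/2+1-|j|)·(N/2+1-|j+k|)`. -/
noncomputable def bhat (N k : ℕ) : ℝ :=
  ∑ j ∈ Finset.Icc (-(N : ℤ) / 2 - 1) ((N : ℤ) / 2 + 1 - (k : ℤ)),
    ((((N : ℤ) / 2 + 1 - |j|) * ((N : ℤ) / 2 + 1 - |j + (k : ℤ)|) : ℤ) : ℝ)

/-- The Chebyshev coefficient `⟨f, w·T̄_k⟩ = ∫_{-1}^1 f(x)·w(x)·T̄_k(x) dx`. -/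
noncomputable def chebCoeff (f : ℝ → ℝ) (k : ℕ) : ℝ :=
  ∫ x in (-1 : ℝ)..1, f x * (wCheb x * Tbar k x)

/-- The Jackson damped Chebyshev approximation
`f̄_N(x) = Σ_{k=0}^N (b̂_N[k]/b̂_N[0]) · ⟨f, w·T̄_k⟩ · T̄_k(x)`. -/
noncomputable def jacksonApprox (N : ℕ) (f : ℝ → ℝ) (x : ℝ) : ℝ :=
  ∑ k ∈ Finset.range (N + 1), (bhat N k / bhat N 0) * chebCoeff f k * Tbar k x

/-- The `k`-th normalized Chebyshev moment `τ_k = (1/n)·Σ_i T̄_k(λ_i)` of the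
spectral density of eigenvalues `λ_1, …, λ_n`. -/
noncomputable def chebMoment (n : ℕ) (lam : Fin n → ℝ) (k : ℕ) : ℝ :=
  (1 / (n : ℝ)) * ∑ i, Tbar k (lam i)

/-- The density returned by the idealized Jackson damped kernel polynomial method:
`q(x) = w(x)·Σ_{k=0}^N (b̂_N[k]/b̂_N[0]) · τ_k · T̄_k(x)`. -/
noncomputable def kpmDensity (n : ℕ) (lam : Fin n → ℝ) (N : ℕ) (x : ℝ) : ℝ :=
  wCheb x * ∑ k ∈ Finset.range (N + 1),
    (bhat N k / bhat N 0) * chebMoment n lam k * Tbar k x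


lemma wCheb_nonneg' (x : ℝ) : 0 ≤ 1 / Real.sqrt (1 - x ^ 2) :=
  div_nonneg zero_le_one (Real.sqrt_nonneg _)

lemma wCheb_intervalIntegrable :
    IntervalIntegrable (fun x : ℝ => 1 / Real.sqrt (1 - x ^ 2)) volume (-1) 1 := by
  apply intervalIntegral.intervalIntegrable_deriv_of_nonneg (g := Real.arcsin)
  · exact Real.continuous_arcsin.continuousOn
  · intro x hx
    simp only [min_eq_left (by norm_num : (-1:ℝ) ≤ 1), max_eq_right (by norm_num : (-1:ℝ) ≤ 1)] at hx
    exact Real.hasDerivAt_arcsin (ne_of_gt hx.1) (ne_of_lt hx.2)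
  · intro x _; exact wCheb_nonneg' x

lemma mul_wCheb_intervalIntegrable (g : ℝ → ℝ)
    (hg : ContinuousOn g (Set.Icc (-1 : ℝ) 1)) :
    IntervalIntegrable (fun x => g x * (1 / Real.sqrt (1 - x ^ 2))) volume (-1) 1 := by
  obtain ⟨C, hC⟩ := (isCompact_Icc).exists_bound_of_continuousOn hg
  rw [intervalIntegrable_iff_integrableOn_Ioc_of_le (by norm_num)]
  have hw : IntegrableOn (fun x : ℝ => 1 / Real.sqrt (1 - x ^ 2)) (Set.Ioc (-1:ℝ) 1) :=
    (intervalIntegrable_iff_integrableOn_Ioc_of_le (by norm_num)).mp wCheb_intervalIntegrable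
  apply Integrable.mono' (hw.const_mul C)
  · exact ((hg.mono Set.Ioc_subset_Icc_self).aestronglyMeasurable measurableSet_Ioc).mul
      ((measurable_const.div
        (Real.continuous_sqrt.measurable.comp
          ((continuous_const.sub (continuous_pow 2)).measurable))).aestronglyMeasurable)
  · filter_upwards [ae_restrict_mem measurableSet_Ioc] with x hx
    rw [norm_mul]
    have h1 : ‖g x‖ ≤ C := hC x (Set.Ioc_subset_Icc_self hx)
    have h2 : ‖1 / Real.sqrt (1 - x ^ 2)‖ = 1 / Real.sqrt (1 - x ^ 2) :=
      Real.norm_of_nonneg (wCheb_nonneg' x)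
    rw [h2]
    exact mul_le_mul_of_nonneg_right h1 (wCheb_nonneg' x)

lemma Tbar_continuous (k : ℕ) : Continuous (Tbar k) := by
  unfold Tbar
  by_cases h : k = 0 <;> simp only [h, if_true, if_false] <;>
    [exact (Polynomial.Chebyshev.T ℝ 0).continuous.div_const _;
     exact continuous_const.mul (Polynomial.Chebyshev.T ℝ (k : ℤ)).continuous]

/-- **Duality between the KPM density and the Jackson approximation of test functions:**
for every continuous `f : [-1,1] → ℝ`,
`∫_{-1}^1 f(x)·q(x) dx = (1/n)·Σ_i f̄_N(λ_i)`. -/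
theorem kpm_density_integral_eq_jacksonApprox_avg (n : ℕ) (hn : 0 < n)
    (lam : Fin n → ℝ) (hlam : ∀ i, lam i ∈ Set.Icc (-1 : ℝ) 1)
    (N : ℕ) (hNpos : 0 < N) (hN4 : 4 ∣ N) :
    ∀ f : ℝ → ℝ, ContinuousOn f (Set.Icc (-1 : ℝ) 1) →
      (∫ x in (-1 : ℝ)..1, f x * kpmDensity n lam N x)
        = (1 / (n : ℝ)) * ∑ i, jacksonApprox N f (lam i) := by
  intro f hf
  have key : ∀ k : ℕ, IntervalIntegrable (fun x => f x * (wCheb x * Tbar k x)) volume (-1) 1 := by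
    intro k
    have heq : (fun x => f x * (wCheb x * Tbar k x))
        = fun x => (f x * Tbar k x) * (1 / Real.sqrt (1 - x ^ 2)) := by
      funext x; simp only [wCheb]; ring
    rw [heq]
    exact mul_wCheb_intervalIntegrable _ (hf.mul (Tbar_continuous k).continuousOn)
  have hLHS : (∫ x in (-1:ℝ)..1, f x * kpmDensity n lam N x)
      = ∑ k ∈ Finset.range (N+1),
          (bhat N k / bhat N 0 * chebMoment n lam k) * chebCoeff f k := by
    have hpt : ∀ x, f x * kpmDensity n lam N x
        = ∑ k ∈ Finset.range (N+1),
            (bhat N k / bhat N 0 * chebMoment n lam k) * (f x * (wCheb x * Tbar k x)) := by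
      intro x
      simp only [kpmDensity, Finset.mul_sum]
      exact Finset.sum_congr rfl fun k _ => by ring
    rw [intervalIntegral.integral_congr (fun x _ => hpt x)]
    rw [intervalIntegral.integral_finset_sum fun k _ => (key k).const_mul _]
    exact Finset.sum_congr rfl fun k _ => by
      rw [intervalIntegral.integral_const_mul]; rfl
  rw [hLHS]
  simp only [jacksonApprox]
  rw [Finset.sum_comm, Finset.mul_sum]
  apply Finset.sum_congr rfl
  intro k _
  simp only [chebMoment, Finset.mul_sum, Finset.sum_mul]
  exact Finset.sum_congr rfl fun i _ => by ring
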